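/- arXiv:2212.00236 — 3 statements merged into one kernel-verified Lean document; each statement's English description precedes it below -/
import Mathlib

section
/- If E is a hyperfinite countable Borel equivalence relation on a standard Borel space X and F is a Borel sub-equivalence relation of E, then F is hyperfinite. -/
def IsEquivRel {X : Type*} (E : Set (X × X)) : Prop :=
  (∀ x, (x, x) ∈ E) ∧ (∀ ⦃x y⦄, (x, y) ∈ E → (y, x) ∈ E) ∧
    (∀ ⦃x y z⦄, (x, y) ∈ E → (y, z) ∈ E → (x, z) ∈ E)

def HasCountableClasses {X : Type*} (E : Set (X × X)) : Prop :=
  ∀ x, {y | (x, y) ∈ E}.Countable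

def HasFiniteClasses {X : Type*} (E : Set (X × X)) : Prop :=
  ∀ x, {y | (x, y) ∈ E}.Finite

/-- `E` is hyperfinite: an increasing union of countably many finite Borel
sub-equivalence relations. -/
def Hyperfinite {X : Type*} [MeasurableSpace X] (E : Set (X × X)) : Prop :=
  ∃ F : ℕ → Set (X × X),
    (∀ n, IsEquivRel (F n) ∧ MeasurableSet (F n) ∧ HasFiniteClasses (F n) ∧ F n ⊆ E) ∧
    Monotone F ∧ (⋃ n, F n) = E

theorem stmt0 {X : Type*} [MeasurableSpace X] [StandardBorelSpace X]
    (E F : Set (X × X))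
    (hE : IsEquivRel E) (hEc : HasCountableClasses E) (hEB : MeasurableSet E)
    (hEh : Hyperfinite E)
    (hF : IsEquivRel F) (hFB : MeasurableSet F) (hFE : F ⊆ E) :
    Hyperfinite F := by
  obtain ⟨G, hG, hGmono, hGunion⟩ := hEh
  refine ⟨fun n => F ∩ G n, fun n => ?_, fun m n hmn => Set.inter_subset_inter_right _ (hGmono hmn), ?_⟩
  · obtain ⟨⟨hGr, hGs, hGt⟩, hGB, hGfin, hGE⟩ := hG n
    obtain ⟨hFr, hFs, hFt⟩ := hF
    refine ⟨⟨fun x => ⟨hFr x, hGr x⟩, fun x y h => ⟨hFs h.1, hGs h.2⟩,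
      fun x y z h h' => ⟨hFt h.1 h'.1, hGt h.2 h'.2⟩⟩, hFB.inter hGB,
      fun x => (hGfin x).subset fun y hy => hy.2, Set.inter_subset_left⟩
  · rw [← Set.inter_iUnion, hGunion, Set.inter_eq_left.2 hFE]
end

section
/- Let Γ be a graph with two metrics d ≤ d_X on its vertex set (d the combinatorial metric of Γ), and suppose there is ν such that for every geodesic triangle pqr in (Γ, d) and every vertex u on p there is a vertex v on q ∪ r with d_X(u, v) ≤ ν; suppose also Γ is ν-hyperbolic with respect to d. Fix a vertex x, a boundary point η, a geodesic ray γ₀ ∈ CGR(x, η), and i ∈ ℕ. Then for every geodesic ray γ ∈ CGR(x, η), there exists a vertex v on γ₀ with d(v, γ₀(i)) ≤ 3ν and d_X(γ(i), v) ≤ ν. -/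
def IsGeodesicSeg {V : Type*} (G : SimpleGraph V) (p : ℕ → V) (n : ℕ) : Prop :=
  ∀ i j, i ≤ n → j ≤ n → G.dist (p i) (p j) = Nat.dist i j

def IsGeodesicRay {V : Type*} (G : SimpleGraph V) (γ : ℕ → V) : Prop :=
  ∀ i j, G.dist (γ i) (γ j) = Nat.dist i j

def SlimTriangles {V : Type*} (G : SimpleGraph V) (δ : ℕ) : Prop :=
  ∀ (p q r : ℕ → V) (np nq nr : ℕ),
    IsGeodesicSeg G p np → IsGeodesicSeg G q nq → IsGeodesicSeg G r nr →
    p np = q 0 → q nq = r 0 → r nr = p 0 →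
    ∀ i ≤ np, ∃ j, (j ≤ nq ∧ G.dist (p i) (q j) ≤ δ) ∨ (j ≤ nr ∧ G.dist (p i) (r j) ≤ δ)

private lemma dist_getVert_le {V : Type*} {G : SimpleGraph V} (hG : G.Connected)
    {u v : V} (p : G.Walk u v)
    (i j : ℕ) (hij : i ≤ j) (hj : j ≤ p.length) :
    G.dist (p.getVert i) (p.getVert j) ≤ j - i := by
  induction j with
  | zero => interval_cases i; simp
  | succ j ih =>
    rcases Nat.lt_or_ge i (j+1) with h | h
    · have hij' : i ≤ j := Nat.lt_succ_iff.mp h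
      have h1 : G.dist (p.getVert i) (p.getVert j) ≤ j - i := ih hij' (by omega)
      have hadj : G.Adj (p.getVert j) (p.getVert (j+1)) := p.adj_getVert_succ (by omega)
      have h2 : G.dist (p.getVert j) (p.getVert (j+1)) ≤ 1 := by
        simpa using SimpleGraph.dist_le hadj.toWalk
      have htri := hG.dist_triangle (u := p.getVert i) (v := p.getVert j)
        (w := p.getVert (j+1))
      omega
    · have : i = j + 1 := by omega
      subst this; simp

private lemma shortest_walk_geodesic {V : Type*} {G : SimpleGraph V} (hG : G.Connected)
    {u v : V} (p : G.Walk u v) (hp : p.length = G.dist u v) :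
    IsGeodesicSeg G p.getVert p.length := by
  have key : ∀ i j, i ≤ j → j ≤ p.length →
      G.dist (p.getVert i) (p.getVert j) = j - i := by
    intro i j hij hj
    have hub : G.dist (p.getVert i) (p.getVert j) ≤ j - i := dist_getVert_le hG p i j hij hj
    have h1 : G.dist u (p.getVert i) ≤ i := by
      have := dist_getVert_le hG p 0 i (by omega) (by omega)
      simpa using this
    have h2 : G.dist (p.getVert j) v ≤ p.length - j := by
      have := dist_getVert_le hG p j p.length hj le_rfl
      simpa [p.getVert_length] using this
    have htri : G.dist u v ≤ G.dist u (p.getVert i) +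
        (G.dist (p.getVert i) (p.getVert j) + G.dist (p.getVert j) v) :=
      le_trans (hG.dist_triangle) (by
        exact Nat.add_le_add_left (hG.dist_triangle) _)
    omega
  intro i j hi hj
  rcases Nat.le_total i j with h | h
  · rw [key i j h hj]; simp [Nat.dist]; omega
  · rw [SimpleGraph.dist_comm, key j i h hi]; simp [Nat.dist]; omega

theorem stmt12 {V : Type*} (G : SimpleGraph V) (hG : G.Connected)
    (dX : V → V → ℕ)
    (hdXsymm : ∀ u v, dX u v = dX v u)
    (hdXtri : ∀ u v w, dX u w ≤ dX u v + dX v w)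
    (hle : ∀ u v, G.dist u v ≤ dX u v)
    (ν : ℕ)
    (hthin : ∀ (p q r : ℕ → V) (np nq nr : ℕ),
      IsGeodesicSeg G p np → IsGeodesicSeg G q nq → IsGeodesicSeg G r nr →
      p np = q 0 → q nq = r 0 → r nr = p 0 →
      ∀ i ≤ np, ∃ j, (j ≤ nq ∧ dX (p i) (q j) ≤ ν) ∨ (j ≤ nr ∧ dX (p i) (r j) ≤ ν))
    (hslim : SlimTriangles G ν)
    (x : V) (γ₀ γ : ℕ → V)
    (hγ₀ : IsGeodesicRay G γ₀) (hγ₀0 : γ₀ 0 = x)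
    (hγ : IsGeodesicRay G γ) (hγ0 : γ 0 = x)
    (hsame : ∃ K, ∀ t, G.dist (γ t) (γ₀ t) ≤ K)
    (i : ℕ) :
    ∃ m, G.dist (γ₀ m) (γ₀ i) ≤ 3 * ν ∧ dX (γ i) (γ₀ m) ≤ ν := by
  obtain ⟨K, hK⟩ := hsame
  have hγx : ∀ t, G.dist x (γ t) = t := by
    intro t; rw [← hγ0]; simpa [Nat.dist] using hγ 0 t
  have hγ₀x : ∀ t, G.dist x (γ₀ t) = t := by
    intro t; rw [← hγ₀0]; simpa [Nat.dist] using hγ₀ 0 t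
  -- generic construction of the triangle and case analysis
  have main : ∀ (δ : ℕ)
      (H : ∀ (p q r : ℕ → V) (np nq nr : ℕ),
        IsGeodesicSeg G p np → IsGeodesicSeg G q nq → IsGeodesicSeg G r nr →
        p np = q 0 → q nq = r 0 → r nr = p 0 →
        ∀ i ≤ np, ∃ j, (j ≤ nq ∧ G.dist (p i) (q j) ≤ ν) ∨ (j ≤ nr ∧ G.dist (p i) (r j) ≤ ν)),
      ∀ t k, t ≤ k → G.dist (γ k) (γ₀ k) + t + ν < k →
      ∃ m, m ≤ k ∧ G.dist (γ t) (γ₀ m) ≤ ν := by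
    intro δ H t k htk hk
    set d := G.dist (γ k) (γ₀ k) with hd
    obtain ⟨w, hw⟩ := ((hG.preconnected (γ k) (γ₀ k))).exists_walk_length_eq_dist
    have hwgeo : IsGeodesicSeg G w.getVert w.length := shortest_walk_geodesic hG w hw
    have hγseg : IsGeodesicSeg G γ k := fun a b _ _ => hγ a b
    have hrseg : IsGeodesicSeg G (fun s => γ₀ (k - s)) k := by
      intro a b ha hb
      have := hγ₀ (k - a) (k - b)
      rw [this]; simp [Nat.dist]; omega
    obtain ⟨j, hj⟩ := H γ w.getVert (fun s => γ₀ (k - s)) k w.length k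
      hγseg hwgeo hrseg (by simp) (by simpa using w.getVert_length) (by simp [hγ₀0, hγ0]) t htk
    rcases hj with ⟨hjle, hjd⟩ | ⟨hjle, hjd⟩
    · exfalso
      have h1 : G.dist x (w.getVert j) ≤ t + ν :=
        le_trans (hG.dist_triangle (v := γ t)) (by rw [hγx]; omega)
      have h2 : G.dist (w.getVert j) (γ₀ k) ≤ d := by
        have := dist_getVert_le hG w j w.length hjle le_rfl
        rw [w.getVert_length] at this; omega
      have h3 : G.dist x (γ₀ k) ≤ G.dist x (w.getVert j) + G.dist (w.getVert j) (γ₀ k) :=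
        hG.dist_triangle
      rw [hγ₀x] at h3
      omega
    · exact ⟨k - j, by omega, hjd⟩
  -- first: fellow traveling within 2ν
  have hslim' := hslim
  unfold SlimTriangles at hslim'
  have fellow : ∀ t, G.dist (γ t) (γ₀ t) ≤ 2 * ν := by
    intro t
    set k := K + t + ν + 1 with hkdef
    obtain ⟨m, hmk, hm⟩ := main ν hslim' t k (by omega)
      (by have := hK k; omega)
    have hmle : G.dist x (γ₀ m) ≤ G.dist x (γ t) + G.dist (γ t) (γ₀ m) := hG.dist_triangle
    have htle : G.dist x (γ t) ≤ G.dist x (γ₀ m) + G.dist (γ₀ m) (γ t) := hG.dist_triangle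
    rw [hγ₀x, hγx] at hmle htle
    rw [SimpleGraph.dist_comm] at htle
    have hmt : G.dist (γ₀ m) (γ₀ t) ≤ ν := by
      rw [hγ₀ m t]; simp [Nat.dist]; omega
    calc G.dist (γ t) (γ₀ t) ≤ G.dist (γ t) (γ₀ m) + G.dist (γ₀ m) (γ₀ t) := hG.dist_triangle
      _ ≤ 2 * ν := by omega
  -- now the real thing with hthin
  have hthin' : ∀ (p q r : ℕ → V) (np nq nr : ℕ),
      IsGeodesicSeg G p np → IsGeodesicSeg G q nq → IsGeodesicSeg G r nr →
      p np = q 0 → q nq = r 0 → r nr = p 0 →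
      ∀ i ≤ np, ∃ j, (j ≤ nq ∧ G.dist (p i) (q j) ≤ ν) ∨ (j ≤ nr ∧ G.dist (p i) (r j) ≤ ν) := by
    intro p q r np nq nr h1 h2 h3 h4 h5 h6 a ha
    obtain ⟨j, hj⟩ := hthin p q r np nq nr h1 h2 h3 h4 h5 h6 a ha
    exact ⟨j, by rcases hj with ⟨h, h'⟩ | ⟨h, h'⟩
                 · exact Or.inl ⟨h, le_trans (hle _ _) h'⟩
                 · exact Or.inr ⟨h, le_trans (hle _ _) h'⟩⟩
  set k := i + 3 * ν + 1 with hkdef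
  have hdk : G.dist (γ k) (γ₀ k) ≤ 2 * ν := fellow k
  have hγseg : IsGeodesicSeg G γ k := fun a b _ _ => hγ a b
  have hrseg : IsGeodesicSeg G (fun s => γ₀ (k - s)) k := by
    intro a b ha hb
    have := hγ₀ (k - a) (k - b)
    rw [this]; simp [Nat.dist]; omega
  set d := G.dist (γ k) (γ₀ k) with hd
  obtain ⟨w, hw⟩ := ((hG.preconnected (γ k) (γ₀ k))).exists_walk_length_eq_dist
  have hwgeo : IsGeodesicSeg G w.getVert w.length := shortest_walk_geodesic hG w hw
  obtain ⟨j, hj⟩ := hthin γ w.getVert (fun s => γ₀ (k - s)) k w.length k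
    hγseg hwgeo hrseg (by simp) (by simpa using w.getVert_length) (by simp [hγ₀0, hγ0]) i (by omega)
  rcases hj with ⟨hjle, hjd⟩ | ⟨hjle, hjd⟩
  · exfalso
    have hjd' : G.dist (γ i) (w.getVert j) ≤ ν := le_trans (hle _ _) hjd
    have h1 : G.dist x (w.getVert j) ≤ i + ν :=
      le_trans (hG.dist_triangle (v := γ i)) (by rw [hγx]; omega)
    have h2 : G.dist (w.getVert j) (γ₀ k) ≤ d := by
      have := dist_getVert_le hG w j w.length hjle le_rfl
      rw [w.getVert_length] at this; omega
    have h3 : G.dist x (γ₀ k) ≤ G.dist x (w.getVert j) + G.dist (w.getVert j) (γ₀ k) :=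
      hG.dist_triangle
    rw [hγ₀x] at h3
    omega
  · refine ⟨k - j, ?_, hjd⟩
    have h1 : G.dist (γ₀ (k - j)) (γ i) ≤ ν := by
      rw [SimpleGraph.dist_comm]; exact le_trans (hle _ _) hjd
    calc G.dist (γ₀ (k - j)) (γ₀ i)
        ≤ G.dist (γ₀ (k - j)) (γ i) + G.dist (γ i) (γ₀ i) := hG.dist_triangle
      _ ≤ 3 * ν := by have := fellow i; omega
end

section
/- Under the hypotheses of the previous statement (metrics d ≤ d_X, ν-thin triangles with respect to d_X, ν-hyperbolicity in d), suppose additionally that the closed d_X-ball of radius ν about the identity (equivalently about any vertex, by vertex-transitivity) is finite with cardinality N. Then for every vertex x, every boundary point η, and every i ∈ ℕ, the set {γ(i) : γ ∈ CGR(x, η)} has cardinality at most (6ν + 1)·N. -/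
open SimpleGraph

lemma exists_geod_seg {V : Type*} {G : SimpleGraph V} (hG : G.Connected) (a b : V) :
    ∃ q : ℕ → V, (∀ i j, i ≤ G.dist a b → j ≤ G.dist a b → G.dist (q i) (q j) = Nat.dist i j)
      ∧ q 0 = a ∧ q (G.dist a b) = b := by
  obtain ⟨w, hw⟩ := hG.exists_walk_length_eq_dist a b
  refine ⟨fun k => w.getVert k, ?_, w.getVert_zero, by rw [← hw]; exact w.getVert_length⟩
  have hstep : ∀ k, G.dist (w.getVert k) (w.getVert (k+1)) ≤ 1 := by
    intro k
    by_cases hk : k < w.length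
    · simpa using SimpleGraph.dist_le (Walk.cons (w.adj_getVert_succ hk) Walk.nil)
    · have h1 : w.getVert k = b := w.getVert_of_length_le (by omega)
      have h2 : w.getVert (k+1) = b := w.getVert_of_length_le (by omega)
      rw [h1, h2, SimpleGraph.dist_self]; omega
  have hub : ∀ k l, G.dist (w.getVert k) (w.getVert (k + l)) ≤ l := by
    intro k l
    induction l with
    | zero => simp
    | succ n ih =>
      have t := hG.dist_triangle (u := w.getVert k) (v := w.getVert (k+n)) (w := w.getVert (k+n+1))
      have := hstep (k+n)
      have : G.dist (w.getVert k) (w.getVert (k+n+1)) ≤ n + 1 := by omega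
      simpa [← add_assoc] using this
  have hub' : ∀ i j, G.dist (w.getVert i) (w.getVert j) ≤ Nat.dist i j := by
    intro i j
    rcases le_total i j with h | h
    · have := hub i (j - i); rw [Nat.add_sub_cancel' h] at this
      rw [Nat.dist_eq_sub_of_le h]; exact this
    · have := hub j (i - j); rw [Nat.add_sub_cancel' h] at this
      rw [SimpleGraph.dist_comm, Nat.dist_eq_sub_of_le_right h]; exact this
  intro i j hi hj
  refine le_antisymm (hub' i j) ?_
  have h1 : G.dist a (w.getVert i) ≤ i := by
    have := hub 0 i; simpa [w.getVert_zero] using this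
  have h2 : G.dist (w.getVert j) b ≤ w.length - j := by
    have := hub j (w.length - j)
    rwa [Nat.add_sub_cancel' (by omega : j ≤ w.length), w.getVert_length] at this
  have htri : G.dist a b ≤ G.dist a (w.getVert i) + G.dist (w.getVert i) (w.getVert j) + G.dist (w.getVert j) b := by
    have t1 := hG.dist_triangle (u := a) (v := w.getVert j) (w := b)
    have t2 := hG.dist_triangle (u := a) (v := w.getVert i) (w := w.getVert j)
    omega
  have htri2 : G.dist a b ≤ G.dist a (w.getVert j) + G.dist (w.getVert j) (w.getVert i) + G.dist (w.getVert i) b := by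
    have t1 := hG.dist_triangle (u := a) (v := w.getVert i) (w := b)
    have t2 := hG.dist_triangle (u := a) (v := w.getVert j) (w := w.getVert i)
    omega
  have h1' : G.dist a (w.getVert j) ≤ j := by
    have := hub 0 j; simpa [w.getVert_zero] using this
  have h2' : G.dist (w.getVert i) b ≤ w.length - i := by
    have := hub i (w.length - i)
    rwa [Nat.add_sub_cancel' (by omega : i ≤ w.length), w.getVert_length] at this
  have hcomm : G.dist (w.getVert j) (w.getVert i) = G.dist (w.getVert i) (w.getVert j) :=
    SimpleGraph.dist_comm
  have hlen : w.length = G.dist a b := hw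
  have hwl : i ≤ w.length ∧ j ≤ w.length := by omega
  simp only [Nat.dist]; omega

theorem stmt13 {V : Type*} (G : SimpleGraph V) (hG : G.Connected)
    (dX : V → V → ℕ)
    (hdXsymm : ∀ u v, dX u v = dX v u)
    (hdXtri : ∀ u v w, dX u w ≤ dX u v + dX v w)
    (hle : ∀ u v, G.dist u v ≤ dX u v)
    (ν : ℕ)
    (hthin : ∀ (p q r : ℕ → V) (np nq nr : ℕ),
      IsGeodesicSeg G p np → IsGeodesicSeg G q nq → IsGeodesicSeg G r nr →
      p np = q 0 → q nq = r 0 → r nr = p 0 →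
      ∀ i ≤ np, ∃ j, (j ≤ nq ∧ dX (p i) (q j) ≤ ν) ∨ (j ≤ nr ∧ dX (p i) (r j) ≤ ν))
    (hslim : SlimTriangles G ν)
    (N : ℕ)
    (hball : ∀ v : V, {w | dX v w ≤ ν}.Finite ∧ {w | dX v w ≤ ν}.ncard ≤ N)
    (x : V) (γ₀ : ℕ → V) (hγ₀ : IsGeodesicRay G γ₀) (hγ₀0 : γ₀ 0 = x)
    (i : ℕ) :
    {v : V | ∃ γ : ℕ → V, IsGeodesicRay G γ ∧ γ 0 = x ∧
        (∃ K, ∀ t, G.dist (γ t) (γ₀ t) ≤ K) ∧ γ i = v}.Finite ∧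
    {v : V | ∃ γ : ℕ → V, IsGeodesicRay G γ ∧ γ 0 = x ∧
        (∃ K, ∀ t, G.dist (γ t) (γ₀ t) ≤ K) ∧ γ i = v}.ncard ≤ (6 * ν + 1) * N := by
  classical
  set T : Finset V :=
    (Finset.Icc (i - ν) (i + ν)).biUnion (fun j => (hball (γ₀ j)).1.toFinset) with hT
  have key : ∀ v, (∃ γ : ℕ → V, IsGeodesicRay G γ ∧ γ 0 = x ∧
      (∃ K, ∀ t, G.dist (γ t) (γ₀ t) ≤ K) ∧ γ i = v) → v ∈ T := by
    rintro v ⟨γ, hγ, hγ0, ⟨K, hK⟩, rfl⟩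
    set t : ℕ := i + K + ν + 1 with ht
    set m : ℕ := G.dist (γ t) (γ₀ t) with hm
    obtain ⟨q, hq, hq0, hqm⟩ := exists_geod_seg hG (γ t) (γ₀ t)
    have hpgeo : IsGeodesicSeg G γ t := fun a b _ _ => hγ a b
    have hqgeo : IsGeodesicSeg G q m := hq
    have hrgeo : IsGeodesicSeg G (fun k => γ₀ (t - k)) t := by
      intro a b ha hb
      rw [hγ₀]
      simp only [Nat.dist]; omega
    obtain ⟨j, hj⟩ := hthin γ q (fun k => γ₀ (t - k)) t m t hpgeo hqgeo hrgeo
      (by rw [hq0]) (by rw [hqm]; simp) (by show γ₀ (t - t) = γ 0; rw [Nat.sub_self, hγ₀0, hγ0]) i (by omega)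
    rcases hj with ⟨hjm, hdq⟩ | ⟨hjt, hdr⟩
    · exfalso
      have h1 : G.dist (γ i) (q j) ≤ ν := le_trans (hle _ _) hdq
      have h2 : G.dist (q j) (γ t) ≤ K := by
        have := hq j 0 hjm (by omega)
        rw [hq0] at this
        have hmK : m ≤ K := hK t
        simp only [Nat.dist] at this; omega
      have h3 : G.dist (γ i) (γ t) = K + ν + 1 := by
        rw [hγ i t]; simp only [Nat.dist]; omega
      have := hG.dist_triangle (u := γ i) (v := q j) (w := γ t)
      omega
    · have h1 : G.dist (γ i) (γ₀ (t - j)) ≤ ν := le_trans (hle _ _) hdr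
      set j' : ℕ := t - j with hj'
      have hxi : G.dist (γ 0) (γ i) = i := by rw [hγ]; simp [Nat.dist]
      have hxj : G.dist (γ₀ 0) (γ₀ j') = j' := by rw [hγ₀]; simp [Nat.dist]
      have t1 := hG.dist_triangle (u := γ 0) (v := γ i) (w := γ₀ j')
      have t2 := hG.dist_triangle (u := γ₀ 0) (v := γ₀ j') (w := γ i)
      have hx0 : γ 0 = γ₀ 0 := by rw [hγ0, hγ₀0]
      rw [hx0] at t1 hxi
      have hcomm : G.dist (γ₀ j') (γ i) = G.dist (γ i) (γ₀ j') := SimpleGraph.dist_comm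
      have hnear : i - ν ≤ j' ∧ j' ≤ i + ν := by omega
      rw [hT]
      simp only [Finset.mem_biUnion, Finset.mem_Icc, Set.Finite.mem_toFinset, Set.mem_setOf_eq]
      exact ⟨j', hnear, by rw [hdXsymm]; exact hdr⟩
  have hsub : {v : V | ∃ γ : ℕ → V, IsGeodesicRay G γ ∧ γ 0 = x ∧
      (∃ K, ∀ t, G.dist (γ t) (γ₀ t) ≤ K) ∧ γ i = v} ⊆ ↑T := fun v hv => key v hv
  constructor
  · exact Set.Finite.subset T.finite_toSet hsub
  · calc _ ≤ (↑T : Set V).ncard := Set.ncard_le_ncard hsub T.finite_toSet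
      _ = T.card := Set.ncard_coe_finset T
      _ ≤ ∑ j ∈ Finset.Icc (i - ν) (i + ν), ((hball (γ₀ j)).1.toFinset).card :=
          Finset.card_biUnion_le
      _ ≤ ∑ _j ∈ Finset.Icc (i - ν) (i + ν), N := by
          refine Finset.sum_le_sum fun j _ => ?_
          have := (hball (γ₀ j)).2
          rwa [Set.ncard_eq_toFinset_card _ (hball (γ₀ j)).1] at this
      _ = (Finset.Icc (i - ν) (i + ν)).card * N := by rw [Finset.sum_const, smul_eq_mul]
      _ ≤ (6 * ν + 1) * N := by
          apply Nat.mul_le_mul_right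
          rw [Nat.card_Icc]; omega
end
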